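/- Let F be a field of characteristic ≠ 2 and α ∈ F with α ∉ {0, 1, −1}. In the algebra 3C(α), with 𝟙 := (α+1)⁻¹(x + y + z) and w := 𝟙 − x, one has w·y = ((α+1)/2)·w + ((1−α)/2)·(y − z), and the (nonunital) subalgebra of 3C(α) generated by {w, y} is all of 3C(α). -/
import Mathlib


/-- The multiplication of the algebra `3C(η)` in the basis `x = e 0`, `y = e 1`, `z = e 2`:
each basis vector is an idempotent and the product of two distinct basis vectors is
`(η/2)` times (their sum minus the third one). -/
def mul3C {F : Type*} [Field F] (η : F) (u v : Fin 3 → F) : Fin 3 → F :=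
  ![u 0 * v 0 + η/2 * (u 0*v 1 + u 1*v 0 + u 0*v 2 + u 2*v 0 - u 1*v 2 - u 2*v 1),
    u 1 * v 1 + η/2 * (u 0*v 1 + u 1*v 0 + u 1*v 2 + u 2*v 1 - u 0*v 2 - u 2*v 0),
    u 2 * v 2 + η/2 * (u 0*v 2 + u 2*v 0 + u 1*v 2 + u 2*v 1 - u 0*v 1 - u 1*v 0)]

/-- **`3C(α)` is generated by the two axes `w` and `y`.**
Let `F` be a field of characteristic `≠ 2` and `α ∉ {0, 1, -1}`.  In the algebra `3C(α)`
(realized on `Fin 3 → F` with multiplication `mul3C α` and basis `x, y, z`), with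
`𝟙 := (α+1)⁻¹ (x+y+z)` and `w := 𝟙 - x`, one has
`w·y = ((α+1)/2) w + ((1-α)/2)(y-z)`, and the (nonunital) subalgebra generated by
`{w, y}` is all of `3C(α)`. -/
theorem threeC_generated_by_w_y
    {F : Type*} [Field F] (hchar : (2 : F) ≠ 0)
    (α : F) (hα0 : α ≠ 0) (hα1 : α ≠ 1) (hαm1 : α ≠ -1)
    (x y z one w : Fin 3 → F)
    (hx : x = ![1, 0, 0]) (hy : y = ![0, 1, 0]) (hz : z = ![0, 0, 1])
    (hone : one = (α + 1)⁻¹ • (x + y + z)) (hw : w = one - x) :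
    mul3C α w y = ((α + 1) / 2) • w + ((1 - α) / 2) • (y - z) ∧
    (∀ S : Submodule F (Fin 3 → F), w ∈ S → y ∈ S →
      (∀ u v : Fin 3 → F, u ∈ S → v ∈ S → mul3C α u v ∈ S) → S = ⊤) := by

  have hα1' : α + 1 ≠ 0 := by
    intro h; apply hαm1; linear_combination h
  subst hx hy hz hone hw
  constructor
  · funext i
    fin_cases i <;>
      · simp [mul3C, Matrix.cons_val_zero, Matrix.cons_val_one]
        field_simp
        ring
  · intro S hwS hyS hmul
    -- z ∈ S
    have hwy := hmul _ _ hwS hyS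
    have key : mul3C α ((α + 1)⁻¹ • (![1,0,0] + ![0,1,0] + ![0,0,1]) - ![1,0,0]) ![0,1,0]
        = ((α + 1) / 2) • ((α + 1)⁻¹ • (![1,0,0] + ![0,1,0] + ![0,0,1]) - ![1,0,0])
          + ((1 - α) / 2) • (![0,1,0] - ![0,0,1]) := by
      funext i
      fin_cases i <;>
        · simp [mul3C]
          field_simp
          ring
    rw [key] at hwy
    have h2 : ((1 - α) / 2) • ((![0,1,0] : Fin 3 → F) - ![0,0,1]) ∈ S := by
      have := S.sub_mem hwy (S.smul_mem ((α + 1) / 2) hwS)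
      simpa using this
    have h1α : (1 - α) / 2 ≠ 0 := by
      apply div_ne_zero _ hchar
      intro h; apply hα1; linear_combination -h
    have hyz : (![0,1,0] : Fin 3 → F) - ![0,0,1] ∈ S := by
      have := S.smul_mem ((1 - α) / 2)⁻¹ h2
      rwa [smul_smul, inv_mul_cancel₀ h1α, one_smul] at this
    have hzS : (![0,0,1] : Fin 3 → F) ∈ S := by
      have := S.sub_mem hyS hyz
      have h : (![0,1,0] : Fin 3 → F) - (![0,1,0] - ![0,0,1]) = ![0,0,1] := by abel
      rwa [h] at this
    -- x ∈ S via y*z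
    have hyzmul := hmul _ _ hyS hzS
    have key2 : mul3C α ![0,1,0] ![0,0,1]
        = (α / 2) • ((![0,1,0] : Fin 3 → F) + ![0,0,1] - ![1,0,0]) := by
      funext i
      fin_cases i <;> · simp [mul3C]; try ring
    rw [key2] at hyzmul
    have hα2 : (α : F) / 2 ≠ 0 := div_ne_zero hα0 hchar
    have hsum : (![0,1,0] : Fin 3 → F) + ![0,0,1] - ![1,0,0] ∈ S := by
      have := S.smul_mem (α / 2)⁻¹ hyzmul
      rwa [smul_smul, inv_mul_cancel₀ hα2, one_smul] at this
    have hxS : (![1,0,0] : Fin 3 → F) ∈ S := by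
      have := S.sub_mem (S.add_mem hyS hzS) hsum
      have h : ((![0,1,0] : Fin 3 → F) + ![0,0,1]) - ((![0,1,0] : Fin 3 → F) + ![0,0,1] - ![1,0,0]) = ![1,0,0] := by abel
      rwa [h] at this
    rw [eq_top_iff]
    intro v _
    have hv : v = v 0 • (![1,0,0] : Fin 3 → F) + v 1 • ![0,1,0] + v 2 • ![0,0,1] := by
      funext i; fin_cases i <;> simp
    rw [hv]
    exact S.add_mem (S.add_mem (S.smul_mem _ hxS) (S.smul_mem _ hyS)) (S.smul_mem _ hzS)
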